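/- arXiv:1006.2580 — 4 statements merged into one kernel-verified Lean document; each statement's English description precedes it below -/
import Mathlib

section
/- Let α, β ∈ (0, π), let q : ℝ → ℝ be continuous, let c ∈ ℝ, and let f : ℝ → ℝ be concave on [0,1] with f(0) = 0 and f ≥ 0 on [0,1]. Suppose φ_α, φ_β : ℝ² → ℝ are C² functions with values in [0,1] satisfying div(A∇φ_α) + (q(X) sin α − c sin α) ∂_Y φ_α + f(φ_α) = 0 and div(B∇φ_β) + (q(X) sin β − c sin β) ∂_Y φ_β + f(φ_β) = 0 on ℝ², where A = [[1, −cos α],[−cos α, 1]] and B = [[1, cos β],[cos β, 1]]. Then at any point (x,y) where ψ(x,y) := φ_α(x, −x cos α + y sin α) + φ_β(x, x cos β + y sin β) ≤ 1, one has Δψ + (q(x) − c) ∂_y ψ + f(ψ) ≤ 0. -/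
/-!
Each front is a shear of a C² function: ψ = φ_α ∘ S(-cos α, sin α) + φ_β ∘ S(cos β, sin β) with
S(a, b)(x, y) = (x, x a + y b). By the chain rule, Δ(u ∘ S(a, b)) = u_XX + 2a u_XY + (a² + b²) u_YY
and ∂_y(u ∘ S(a, b)) = b u_Y, so, as cos² + sin² = 1, the two front equations give
Δψ + (q − c) ∂_y ψ = −f(φ_α) − f(φ_β) at the sheared points. A concave f with f(0) = 0 is
subadditive, hence −f(φ_α) − f(φ_β) ≤ −f(ψ) wherever ψ ≤ 1.
-/

/-- Partial derivative in the first variable. -/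
noncomputable def dX (u : ℝ → ℝ → ℝ) : ℝ → ℝ → ℝ := fun x y => deriv (fun s => u s y) x

/-- Partial derivative in the second variable. -/
noncomputable def dY (u : ℝ → ℝ → ℝ) : ℝ → ℝ → ℝ := fun x y => deriv (fun s => u x s) y

open Function

theorem ConcaveOn.mul_le_map_mul {s : Set ℝ} {f : ℝ → ℝ} (hf : ConcaveOn ℝ s f) (h0 : 0 ∈ s)
    (hf0 : f 0 = 0) {t z : ℝ} (hz : z ∈ s) (ht₀ : 0 ≤ t) (ht₁ : t ≤ 1) :
    t * f z ≤ f (t * z) := by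
  simpa [hf0] using hf.2 hz h0 ht₀ (sub_nonneg.2 ht₁) (add_sub_cancel t 1)

theorem ConcaveOn.map_add_le {s : Set ℝ} {f : ℝ → ℝ} (hf : ConcaveOn ℝ s f) (h0 : 0 ∈ s)
    (hf0 : f 0 = 0) {a b : ℝ} (ha : 0 ≤ a) (hb : 0 ≤ b) (hab : a + b ∈ s) :
    f (a + b) ≤ f a + f b := by
  rcases (add_nonneg ha hb).eq_or_lt with h | h
  · obtain rfl : a = 0 := by linarith
    obtain rfl : b = 0 := by linarith
    simp [hf0]
  have hfa := hf.mul_le_map_mul h0 hf0 hab (div_nonneg ha h.le)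
    (div_le_one_of_le₀ (le_add_of_nonneg_right hb) h.le)
  have hfb := hf.mul_le_map_mul h0 hf0 hab (div_nonneg hb h.le)
    (div_le_one_of_le₀ (le_add_of_nonneg_left ha) h.le)
  rw [div_mul_cancel₀ _ h.ne'] at hfa hfb
  calc f (a + b) = a / (a + b) * f (a + b) + b / (a + b) * f (a + b) := by field_simp
    _ ≤ f a + f b := add_le_add hfa hfb

section SecondDerivative

variable {𝕜 E F G : Type*} [NontriviallyNormedField 𝕜]
  [NormedAddCommGroup E] [NormedSpace 𝕜 E] [NormedAddCommGroup F] [NormedSpace 𝕜 F]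
  [NormedAddCommGroup G] [NormedSpace 𝕜 G]

theorem ContDiff.differentiable_fderiv {U : E → F} {n : WithTop ℕ∞} (hU : ContDiff 𝕜 n U)
    (hn : 2 ≤ n) : Differentiable 𝕜 (fderiv 𝕜 U) :=
  (hU.fderiv_right (m := 1) hn).differentiable one_ne_zero

theorem fderiv_fderiv_apply_const {U : E → F} {z : E}
    (hU : DifferentiableAt 𝕜 (fderiv 𝕜 U) z) (v w : E) :
    fderiv 𝕜 (fun p => fderiv 𝕜 U p v) z w = fderiv 𝕜 (fderiv 𝕜 U) z w v := by
  simp [fderiv_clm_apply hU (differentiableAt_const v)]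

theorem fderiv_fderiv_comp_continuousLinearMap {U : F → G} {n : WithTop ℕ∞}
    (hU : ContDiff 𝕜 n U) (hn : 2 ≤ n) (L : E →L[𝕜] F) (p v w : E) :
    fderiv 𝕜 (fderiv 𝕜 (U ∘ L)) p v w = fderiv 𝕜 (fderiv 𝕜 U) (L p) (L v) (L w) := by
  simpa [iteratedFDeriv_two_apply] using
    congrArg (· ![v, w]) (L.iteratedFDeriv_comp_right hU p (n := n) (i := 2) (mod_cast hn))

end SecondDerivative

section PartialDerivatives

variable {u v : ℝ → ℝ → ℝ}

theorem dX_eq_fderiv {x y : ℝ} (hu : DifferentiableAt ℝ (uncurry u) (x, y)) :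
    dX u x y = fderiv ℝ (uncurry u) (x, y) (1, 0) := by
  have hline : HasDerivAt (fun s : ℝ => (s, y)) ((1 : ℝ), (0 : ℝ)) x :=
    (hasDerivAt_id x).prodMk (hasDerivAt_const x y)
  exact (hu.hasFDerivAt.comp_hasDerivAt x hline).deriv

theorem dY_eq_fderiv {x y : ℝ} (hu : DifferentiableAt ℝ (uncurry u) (x, y)) :
    dY u x y = fderiv ℝ (uncurry u) (x, y) (0, 1) := by
  have hline : HasDerivAt (fun s : ℝ => (x, s)) ((0 : ℝ), (1 : ℝ)) y :=
    (hasDerivAt_const y x).prodMk (hasDerivAt_id y)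
  exact (hu.hasFDerivAt.comp_hasDerivAt y hline).deriv

theorem uncurry_dX (hu : Differentiable ℝ (uncurry u)) :
    uncurry (dX u) = fun p => fderiv ℝ (uncurry u) p (1, 0) :=
  funext fun p => dX_eq_fderiv (hu p)

theorem uncurry_dY (hu : Differentiable ℝ (uncurry u)) :
    uncurry (dY u) = fun p => fderiv ℝ (uncurry u) p (0, 1) :=
  funext fun p => dY_eq_fderiv (hu p)

theorem differentiable_uncurry_dX (hu : ContDiff ℝ 2 (uncurry u)) :
    Differentiable ℝ (uncurry (dX u)) := by
  rw [uncurry_dX (hu.differentiable two_ne_zero)]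
  exact (hu.differentiable_fderiv le_rfl).clm_apply (differentiable_const _)

theorem differentiable_uncurry_dY (hu : ContDiff ℝ 2 (uncurry u)) :
    Differentiable ℝ (uncurry (dY u)) := by
  rw [uncurry_dY (hu.differentiable two_ne_zero)]
  exact (hu.differentiable_fderiv le_rfl).clm_apply (differentiable_const _)

theorem dX_dX_eq_fderiv_fderiv (hu : ContDiff ℝ 2 (uncurry u)) (x y : ℝ) :
    dX (dX u) x y = fderiv ℝ (fderiv ℝ (uncurry u)) (x, y) (1, 0) (1, 0) := by
  rw [dX_eq_fderiv (differentiable_uncurry_dX hu _), uncurry_dX (hu.differentiable two_ne_zero),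
    fderiv_fderiv_apply_const (hu.differentiable_fderiv le_rfl _)]

theorem dY_dX_eq_fderiv_fderiv (hu : ContDiff ℝ 2 (uncurry u)) (x y : ℝ) :
    dY (dX u) x y = fderiv ℝ (fderiv ℝ (uncurry u)) (x, y) (0, 1) (1, 0) := by
  rw [dY_eq_fderiv (differentiable_uncurry_dX hu _), uncurry_dX (hu.differentiable two_ne_zero),
    fderiv_fderiv_apply_const (hu.differentiable_fderiv le_rfl _)]

theorem dY_dY_eq_fderiv_fderiv (hu : ContDiff ℝ 2 (uncurry u)) (x y : ℝ) :
    dY (dY u) x y = fderiv ℝ (fderiv ℝ (uncurry u)) (x, y) (0, 1) (0, 1) := by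
  rw [dY_eq_fderiv (differentiable_uncurry_dY hu _), uncurry_dY (hu.differentiable two_ne_zero),
    fderiv_fderiv_apply_const (hu.differentiable_fderiv le_rfl _)]

theorem dX_add (hu : Differentiable ℝ (uncurry u)) (hv : Differentiable ℝ (uncurry v)) :
    dX (fun x y => u x y + v x y) = fun x y => dX u x y + dX v x y := by
  ext x y
  exact deriv_add (hu.comp (differentiable_id.prodMk (differentiable_const y)) x)
    (hv.comp (differentiable_id.prodMk (differentiable_const y)) x)

theorem dY_add (hu : Differentiable ℝ (uncurry u)) (hv : Differentiable ℝ (uncurry v)) :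
    dY (fun x y => u x y + v x y) = fun x y => dY u x y + dY v x y := by
  ext x y
  exact deriv_add (hu.comp ((differentiable_const x).prodMk differentiable_id) y)
    (hv.comp ((differentiable_const x).prodMk differentiable_id) y)

theorem dX_dX_add (hu : ContDiff ℝ 2 (uncurry u)) (hv : ContDiff ℝ 2 (uncurry v)) :
    dX (dX fun x y => u x y + v x y) = fun x y => dX (dX u) x y + dX (dX v) x y := by
  rw [dX_add (hu.differentiable two_ne_zero) (hv.differentiable two_ne_zero),
    dX_add (differentiable_uncurry_dX hu) (differentiable_uncurry_dX hv)]

theorem dY_dY_add (hu : ContDiff ℝ 2 (uncurry u)) (hv : ContDiff ℝ 2 (uncurry v)) :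
    dY (dY fun x y => u x y + v x y) = fun x y => dY (dY u) x y + dY (dY v) x y := by
  rw [dY_add (hu.differentiable two_ne_zero) (hv.differentiable two_ne_zero),
    dY_add (differentiable_uncurry_dY hu) (differentiable_uncurry_dY hv)]

end PartialDerivatives

def shear (a b : ℝ) : ℝ × ℝ →L[ℝ] ℝ × ℝ :=
  (ContinuousLinearMap.fst ℝ ℝ ℝ).prod
    ((ContinuousLinearMap.fst ℝ ℝ ℝ).smulRight a + (ContinuousLinearMap.snd ℝ ℝ ℝ).smulRight b)

@[simp]
theorem shear_apply (a b : ℝ) (p : ℝ × ℝ) : shear a b p = (p.1, p.1 * a + p.2 * b) := rfl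

section Shear

variable {u : ℝ → ℝ → ℝ}

theorem uncurry_comp_shear (a b : ℝ) :
    uncurry (fun x y => u x (x * a + y * b)) = uncurry u ∘ shear a b := rfl

theorem contDiff_uncurry_comp_shear {n : WithTop ℕ∞} (hu : ContDiff ℝ n (uncurry u)) (a b : ℝ) :
    ContDiff ℝ n (uncurry fun x y => u x (x * a + y * b)) :=
  hu.comp (shear a b).contDiff

theorem dY_comp_shear (hu : Differentiable ℝ (uncurry u)) (a b x y : ℝ) :
    dY (fun x y => u x (x * a + y * b)) x y = b * dY u x (x * a + y * b) := by
  have hw : Differentiable ℝ (uncurry fun x y => u x (x * a + y * b)) :=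
    hu.comp (shear a b).differentiable
  rw [dY_eq_fderiv (hw _), dY_eq_fderiv (hu _), uncurry_comp_shear,
    fderiv_comp _ (hu _) (shear a b).differentiableAt, ContinuousLinearMap.fderiv]
  have he : shear a b (0, 1) = b • ((0 : ℝ), (1 : ℝ)) := by ext <;> simp
  rw [ContinuousLinearMap.comp_apply, he, map_smul, shear_apply, smul_eq_mul]

theorem dX_dX_add_dY_dY_comp_shear (hu : ContDiff ℝ 2 (uncurry u)) (a b x y : ℝ) :
    dX (dX fun x y => u x (x * a + y * b)) x y + dY (dY fun x y => u x (x * a + y * b)) x y =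
      dX (dX u) x (x * a + y * b) + 2 * a * dY (dX u) x (x * a + y * b)
        + (a ^ 2 + b ^ 2) * dY (dY u) x (x * a + y * b) := by
  have hw := contDiff_uncurry_comp_shear hu a b
  rw [dX_dX_eq_fderiv_fderiv hw, dY_dY_eq_fderiv_fderiv hw, uncurry_comp_shear,
    fderiv_fderiv_comp_continuousLinearMap hu le_rfl,
    fderiv_fderiv_comp_continuousLinearMap hu le_rfl, dX_dX_eq_fderiv_fderiv hu,
    dY_dX_eq_fderiv_fderiv hu, dY_dY_eq_fderiv_fderiv hu]
  have he₁ : shear a b (1, 0) = ((1 : ℝ), (0 : ℝ)) + a • ((0 : ℝ), (1 : ℝ)) := by ext <;> simp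
  have he₂ : shear a b (0, 1) = b • ((0 : ℝ), (1 : ℝ)) := by ext <;> simp
  have hsymm := hu.contDiffAt.isSymmSndFDerivAt (x := (x, x * a + y * b)) (by simp)
    (1, 0) (0, 1)
  rw [he₁, he₂, shear_apply]
  simp only [map_add, map_smul, add_apply, smul_apply, smul_eq_mul, hsymm]
  ring

end Shear

theorem stmt4_general (α β c : ℝ)
    (q f : ℝ → ℝ)
    (hconc : ConcaveOn ℝ (Set.Icc (0:ℝ) 1) f) (hf0 : f 0 = 0)
    (φα φβ : ℝ → ℝ → ℝ)
    (hφαreg : ContDiff ℝ 2 (fun p : ℝ × ℝ => φα p.1 p.2))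
    (hφβreg : ContDiff ℝ 2 (fun p : ℝ × ℝ => φβ p.1 p.2))
    (hφαrange : ∀ X Y : ℝ, φα X Y ∈ Set.Icc (0:ℝ) 1)
    (hφβrange : ∀ X Y : ℝ, φβ X Y ∈ Set.Icc (0:ℝ) 1)
    (heqα : ∀ X Y : ℝ,
      dX (dX φα) X Y - 2 * Real.cos α * dY (dX φα) X Y + dY (dY φα) X Y
        + (q X * Real.sin α - c * Real.sin α) * dY φα X Y + f (φα X Y) = 0)
    (heqβ : ∀ X Y : ℝ,
      dX (dX φβ) X Y + 2 * Real.cos β * dY (dX φβ) X Y + dY (dY φβ) X Y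
        + (q X * Real.sin β - c * Real.sin β) * dY φβ X Y + f (φβ X Y) = 0) :
    ∀ x y : ℝ,
      (φα x (-x * Real.cos α + y * Real.sin α) + φβ x (x * Real.cos β + y * Real.sin β) ≤ 1) →
      dX (dX (fun x' y' => φα x' (-x' * Real.cos α + y' * Real.sin α)
          + φβ x' (x' * Real.cos β + y' * Real.sin β))) x y
        + dY (dY (fun x' y' => φα x' (-x' * Real.cos α + y' * Real.sin α)
          + φβ x' (x' * Real.cos β + y' * Real.sin β))) x y
        + (q x - c) * dY (fun x' y' => φα x' (-x' * Real.cos α + y' * Real.sin α)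
          + φβ x' (x' * Real.cos β + y' * Real.sin β)) x y
        + f (φα x (-x * Real.cos α + y * Real.sin α)
          + φβ x (x * Real.cos β + y * Real.sin β)) ≤ 0 := by
  intro x y hle
  simp only [neg_mul_comm] at hle ⊢
  have hwα := contDiff_uncurry_comp_shear hφαreg (-Real.cos α) (Real.sin α)
  have hwβ := contDiff_uncurry_comp_shear hφβreg (Real.cos β) (Real.sin β)
  rw [dX_dX_add hwα hwβ, dY_dY_add hwα hwβ,
    dY_add (hwα.differentiable two_ne_zero) (hwβ.differentiable two_ne_zero)]
  have hΔα := dX_dX_add_dY_dY_comp_shear hφαreg (-Real.cos α) (Real.sin α) x y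
  have hΔβ := dX_dX_add_dY_dY_comp_shear hφβreg (Real.cos β) (Real.sin β) x y
  have hdα := dY_comp_shear (hφαreg.differentiable two_ne_zero) (-Real.cos α) (Real.sin α) x y
  have hdβ := dY_comp_shear (hφβreg.differentiable two_ne_zero) (Real.cos β) (Real.sin β) x y
  have hsub := hconc.map_add_le ⟨le_rfl, zero_le_one⟩ hf0 (hφαrange _ _).1 (hφβrange _ _).1
    ⟨add_nonneg (hφαrange _ _).1 (hφβrange _ _).1, hle⟩
  linear_combination hΔα + hΔβ + (q x - c) * (hdα + hdβ)
    + heqα x (x * -Real.cos α + y * Real.sin α) + heqβ x (x * Real.cos β + y * Real.sin β) + hsub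
    + dY (dY φα) x (x * -Real.cos α + y * Real.sin α) * Real.cos_sq_add_sin_sq α
    + dY (dY φβ) x (x * Real.cos β + y * Real.sin β) * Real.cos_sq_add_sin_sq β

/-- The sum ψ of the left and right oblique planar fronts is a supersolution of
Δψ + (q(x) − c)∂_yψ + f(ψ) = 0 at any point where ψ ≤ 1, using sub-additivity of f
(f concave on [0,1], f(0) = 0, f ≥ 0 on [0,1]).
Here A = [[1, −cos α],[−cos α, 1]], B = [[1, cos β],[cos β, 1]]. -/
theorem stmt4 (α β c : ℝ) (hα : α ∈ Set.Ioo 0 Real.pi) (hβ : β ∈ Set.Ioo 0 Real.pi)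
    (q f : ℝ → ℝ) (hq : Continuous q)
    (hconc : ConcaveOn ℝ (Set.Icc (0:ℝ) 1) f) (hf0 : f 0 = 0)
    (hfnonneg : ∀ s ∈ Set.Icc (0:ℝ) 1, 0 ≤ f s)
    (φα φβ : ℝ → ℝ → ℝ)
    (hφαreg : ContDiff ℝ 2 (fun p : ℝ × ℝ => φα p.1 p.2))
    (hφβreg : ContDiff ℝ 2 (fun p : ℝ × ℝ => φβ p.1 p.2))
    (hφαrange : ∀ X Y : ℝ, φα X Y ∈ Set.Icc (0:ℝ) 1)
    (hφβrange : ∀ X Y : ℝ, φβ X Y ∈ Set.Icc (0:ℝ) 1)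
    (heqα : ∀ X Y : ℝ,
      dX (dX φα) X Y - 2 * Real.cos α * dY (dX φα) X Y + dY (dY φα) X Y
        + (q X * Real.sin α - c * Real.sin α) * dY φα X Y + f (φα X Y) = 0)
    (heqβ : ∀ X Y : ℝ,
      dX (dX φβ) X Y + 2 * Real.cos β * dY (dX φβ) X Y + dY (dY φβ) X Y
        + (q X * Real.sin β - c * Real.sin β) * dY φβ X Y + f (φβ X Y) = 0) :
    ∀ x y : ℝ,
      (φα x (-x * Real.cos α + y * Real.sin α) + φβ x (x * Real.cos β + y * Real.sin β) ≤ 1) →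
      dX (dX (fun x' y' => φα x' (-x' * Real.cos α + y' * Real.sin α)
          + φβ x' (x' * Real.cos β + y' * Real.sin β))) x y
        + dY (dY (fun x' y' => φα x' (-x' * Real.cos α + y' * Real.sin α)
          + φβ x' (x' * Real.cos β + y' * Real.sin β))) x y
        + (q x - c) * dY (fun x' y' => φα x' (-x' * Real.cos α + y' * Real.sin α)
          + φβ x' (x' * Real.cos β + y' * Real.sin β)) x y
        + f (φα x (-x * Real.cos α + y * Real.sin α)
          + φβ x (x * Real.cos β + y * Real.sin β)) ≤ 0 :=
  stmt4_general α β c q f hconc hf0 φα φβ hφαreg hφβreg hφαrange hφβrange heqα heqβ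
end

section
/- Let q : ℝ → ℝ be continuous, L-periodic with ∫₀^L q = 0, let c > 0, θ ∈ ℝ, Λ ∈ ℝ, and f'(0) > 0. Suppose for each λ ∈ ℝ, k_θ(λ) denotes the principal eigenvalue of the operator L_{θ,λ} g = g'' + 2θ g' + (θ² + λ² − cλ + q(x)λ + f'(0)) g acting on L-periodic C² functions, with positive L-periodic principal eigenfunction. Then k_θ(0) = θ² + f'(0) > 0 and the derivative of λ ↦ k_θ(λ) at λ = 0 equals −c < 0. -/
/-!
Write `k λ = θ² + λ² - cλ + f'(0) + m λ`; an eigenfunction `φ` then solves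
`φ'' + 2θφ' + λqφ = mφ`, and its logarithmic derivative `v = φ'/φ` is periodic, of mean zero,
vanishes at a maximum of `φ`, and solves the Riccati equation `v' = m - λq - 2θv - v²`.
Integrating this equation over a period gives `∫ v² = mL`, so `m ≥ 0`. Multiplying it by `v'` and
integrating gives `∫ v'(v' + λq) = 0`, hence `∫ v'² ≤ λ² ∫ q²`, and the Poincaré-type bound
`v² ≤ L ∫ v'²` (valid because `v` has a zero) yields `m ≤ L λ² ∫ q²`. So `m λ = O(λ²)`.
-/

open Function Filter Asymptotics intervalIntegral

theorem Function.Periodic.deriv {𝕜 F : Type*} [NontriviallyNormedField 𝕜] [NormedAddCommGroup F]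
    [NormedSpace 𝕜 F] {f : 𝕜 → F} {c : 𝕜} (h : Periodic f c) : Periodic (_root_.deriv f) c :=
  fun x => by rw [← deriv_comp_add_const, show (fun y => f (y + c)) = f from funext h]

theorem Function.Periodic.intervalIntegral_eq_zero_of_hasDerivAt {E : Type*}
    [NormedAddCommGroup E] [NormedSpace ℝ E] [CompleteSpace E] {f f' : ℝ → E} {L : ℝ}
    (h : Periodic f L) (hf : ∀ x, HasDerivAt f (f' x) x) (hf' : Continuous f') (a : ℝ) :
    ∫ x in a..a + L, f' x = 0 := by
  rw [integral_eq_sub_of_hasDerivAt (fun x _ => hf x) (hf'.intervalIntegrable _ _), h, sub_self]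

theorem Function.Periodic.exists_forall_le_of_continuous {f : ℝ → ℝ} {L : ℝ} (hL : 0 < L)
    (h : Periodic f L) (hf : Continuous f) : ∃ x₀, ∀ x, f x ≤ f x₀ := by
  obtain ⟨x₀, -, hmax⟩ := isCompact_Icc.exists_isMaxOn (Set.nonempty_Icc.mpr hL.le)
    hf.continuousOn
  refine ⟨x₀, fun x => ?_⟩
  obtain ⟨y, hy, hxy⟩ := h.exists_mem_Ico₀ hL x
  rw [hxy]
  exact hmax (Set.Ico_subset_Icc_self hy)

theorem sq_intervalIntegral_le_mul {f : ℝ → ℝ} {a b : ℝ} (hab : a ≤ b) (hf : Continuous f) :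
    (∫ x in a..b, f x) ^ 2 ≤ (b - a) * ∫ x in a..b, f x ^ 2 := by
  rcases hab.eq_or_lt with rfl | hab'
  · simp
  set I := ∫ x in a..b, f x
  have h1 : Continuous fun x => (b - a) ^ 2 * f x ^ 2 := by fun_prop
  have h2 : Continuous fun x => 2 * (b - a) * I * f x := by fun_prop
  have h12 : Continuous fun x => (b - a) ^ 2 * f x ^ 2 - 2 * (b - a) * I * f x := by fun_prop
  -- Cauchy–Schwarz via the nonnegativity of `∫ ((b - a) f - I)²`.
  have hexpand : ∫ x in a..b, ((b - a) * f x - I) ^ 2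
      = (b - a) * ((b - a) * (∫ x in a..b, f x ^ 2) - I ^ 2) := by
    calc ∫ x in a..b, ((b - a) * f x - I) ^ 2
        = ∫ x in a..b, ((b - a) ^ 2 * f x ^ 2 - 2 * (b - a) * I * f x + I ^ 2) :=
          integral_congr fun x _ => by ring
      _ = (b - a) ^ 2 * (∫ x in a..b, f x ^ 2) - 2 * (b - a) * I * I + (b - a) * I ^ 2 := by
          rw [integral_add (h12.intervalIntegrable _ _) intervalIntegrable_const,
            integral_sub (h1.intervalIntegrable _ _) (h2.intervalIntegrable _ _),
            integral_const_mul, integral_const_mul, integral_const, smul_eq_mul]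
      _ = _ := by ring
  have hnonneg : 0 ≤ ∫ x in a..b, ((b - a) * f x - I) ^ 2 :=
    integral_nonneg hab fun _ _ => sq_nonneg _
  rw [hexpand] at hnonneg
  linarith [(mul_nonneg_iff_of_pos_left (sub_pos.mpr hab')).mp hnonneg]

theorem Function.Periodic.sq_le_mul_intervalIntegral_sq {v v' : ℝ → ℝ} {L x₀ : ℝ} (hL : 0 < L)
    (h : Periodic v L) (hv : ∀ x, HasDerivAt v (v' x) x) (hv' : Continuous v') (hx₀ : v x₀ = 0)
    (x : ℝ) : v x ^ 2 ≤ L * ∫ y in (0)..L, v' y ^ 2 := by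
  have hv'_eq : v' = _root_.deriv v := funext fun y => (hv y).deriv.symm
  have hv'sq : Periodic (fun y => v' y ^ 2) L := fun y => by simp only [hv'_eq, h.deriv y]
  obtain ⟨y, hy, hxy⟩ := h.exists_mem_Ico hL x x₀
  calc v x ^ 2 = (∫ t in x₀..y, v' t) ^ 2 := by
        rw [hxy, integral_eq_sub_of_hasDerivAt (fun t _ => hv t) (hv'.intervalIntegrable _ _),
          hx₀, sub_zero]
    _ ≤ (y - x₀) * ∫ t in x₀..y, v' t ^ 2 := sq_intervalIntegral_le_mul hy.1 hv'
    _ ≤ L * ∫ t in x₀..x₀ + L, v' t ^ 2 := by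
        refine mul_le_mul (by linarith [hy.2]) (integral_mono_interval le_rfl hy.1 hy.2.le
          (.of_forall fun _ => sq_nonneg _) ((hv'.pow 2).intervalIntegrable _ _))
          (integral_nonneg hy.1 fun _ _ => sq_nonneg _) hL.le
    _ = L * ∫ t in (0)..L, v' t ^ 2 := by rw [hv'sq.intervalIntegral_add_eq x₀ 0, zero_add]

section Riccati

variable {v p : ℝ → ℝ} {θ m L : ℝ}

theorem integral_sq_eq_of_riccati (h : Periodic v L)
    (hv : ∀ x, HasDerivAt v (m - p x - 2 * θ * v x - v x ^ 2) x) (hvc : Continuous v)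
    (hp : Continuous p) (hv0 : ∫ x in (0)..L, v x = 0) (hp0 : ∫ x in (0)..L, p x = 0) :
    ∫ x in (0)..L, v x ^ 2 = m * L := by
  have hzero := h.intervalIntegral_eq_zero_of_hasDerivAt hv (by fun_prop) 0
  rw [zero_add, integral_sub, integral_sub, integral_sub, integral_const_mul, integral_const, hv0,
    hp0, smul_eq_mul] at hzero
  · linarith
  all_goals exact Continuous.intervalIntegrable (by fun_prop) _ _

theorem integral_deriv_sq_le_of_riccati (hL : 0 ≤ L) (h : Periodic v L)
    (hv : ∀ x, HasDerivAt v (m - p x - 2 * θ * v x - v x ^ 2) x) (hvc : Continuous v)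
    (hp : Continuous p) :
    ∫ x in (0)..L, (m - p x - 2 * θ * v x - v x ^ 2) ^ 2 ≤ ∫ x in (0)..L, p x ^ 2 := by
  set w := fun x => m - p x - 2 * θ * v x - v x ^ 2
  -- `w (w + p)` is the derivative of the periodic function `m v - θ v² - v³ / 3`.
  have hprim : ∀ x, HasDerivAt (fun y => m * v y - θ * v y ^ 2 - v y ^ 3 / 3)
      (w x * (w x + p x)) x := fun x => by
    have hx := (((hv x).const_mul m).sub (((hv x).pow 2).const_mul θ)).sub
      (((hv x).pow 3).div_const 3)
    exact hx.congr_deriv (by norm_num [w]; ring)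
  have hper : Periodic (fun y => m * v y - θ * v y ^ 2 - v y ^ 3 / 3) L := fun y => by
    dsimp only; rw [h y]
  have hzero := hper.intervalIntegral_eq_zero_of_hasDerivAt hprim (by fun_prop) 0
  rw [zero_add] at hzero
  have hle : ∫ x in (0)..L, (w x ^ 2 - p x ^ 2) ≤ ∫ x in (0)..L, 2 * (w x * (w x + p x)) := by
    refine integral_mono_on hL ?_ ?_ fun x _ => by nlinarith [sq_nonneg (w x + p x)]
    all_goals exact Continuous.intervalIntegrable (by fun_prop) _ _
  rw [integral_sub, integral_const_mul, hzero] at hle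
  · linarith
  all_goals exact Continuous.intervalIntegrable (by fun_prop) _ _

theorem riccati_periodic_bounds {x₀ : ℝ} (hL : 0 < L) (h : Periodic v L)
    (hv : ∀ x, HasDerivAt v (m - p x - 2 * θ * v x - v x ^ 2) x) (hvc : Continuous v)
    (hp : Continuous p) (hv0 : ∫ x in (0)..L, v x = 0) (hp0 : ∫ x in (0)..L, p x = 0)
    (hx₀ : v x₀ = 0) :
    0 ≤ m ∧ m ≤ L * ∫ x in (0)..L, p x ^ 2 := by
  have hsq := integral_sq_eq_of_riccati h hv hvc hp hv0 hp0
  have hpoint : ∀ x, v x ^ 2 ≤ L * ∫ x in (0)..L, p x ^ 2 := fun x =>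
    (h.sq_le_mul_intervalIntegral_sq hL hv (by fun_prop) hx₀ x).trans
      (mul_le_mul_of_nonneg_left (integral_deriv_sq_le_of_riccati hL.le h hv hvc hp) hL.le)
  constructor
  · refine nonneg_of_mul_nonneg_left ?_ hL
    rw [← hsq]
    exact integral_nonneg hL.le fun _ _ => sq_nonneg _
  · refine le_of_mul_le_mul_right ?_ hL
    calc m * L = ∫ x in (0)..L, v x ^ 2 := hsq.symm
      _ ≤ ∫ _ in (0)..L, L * ∫ x in (0)..L, p x ^ 2 :=
          integral_mono_on hL.le ((hvc.pow 2).intervalIntegrable _ _) intervalIntegrable_const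
            fun x _ => hpoint x
      _ = (L * ∫ x in (0)..L, p x ^ 2) * L := by
          rw [integral_const, smul_eq_mul, sub_zero, mul_comm]

end Riccati

section Eigenfunction

variable {φ p : ℝ → ℝ} {θ m L : ℝ}

theorem hasDerivAt_logDeriv_of_ode (hφ : ContDiff ℝ 2 φ) {x : ℝ} (hφx : φ x ≠ 0)
    (hode : deriv (deriv φ) x + 2 * θ * deriv φ x + p x * φ x = m * φ x) :
    HasDerivAt (logDeriv φ) (m - p x - 2 * θ * logDeriv φ x - logDeriv φ x ^ 2) x := by
  refine ((hφ.differentiable_deriv_two x).hasDerivAt.div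
    ((hφ.differentiable two_ne_zero x).hasDerivAt) hφx).congr_deriv ?_
  rw [logDeriv_apply]
  field_simp
  linear_combination φ x * hode

theorem Function.Periodic.intervalIntegral_logDeriv_eq_zero (h : Periodic φ L)
    (hφ : ContDiff ℝ 1 φ) (hpos : ∀ x, 0 < φ x) : ∫ x in (0)..L, logDeriv φ x = 0 := by
  have hlog : ∀ x, HasDerivAt (fun y => Real.log (φ y)) (logDeriv φ x) x := fun x =>
    ((hφ.differentiable one_ne_zero x).hasDerivAt.log (hpos x).ne')
  have hper : Periodic (fun y => Real.log (φ y)) L := fun y => by dsimp only; rw [h y]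
  simpa using hper.intervalIntegral_eq_zero_of_hasDerivAt hlog
    ((hφ.continuous_deriv le_rfl).div hφ.continuous fun x => (hpos x).ne') 0

theorem eigenvalue_bounds_of_pos_periodic_eigenfunction (hL : 0 < L) (hp : Continuous p)
    (hp0 : ∫ x in (0)..L, p x = 0) (hφ : ContDiff ℝ 2 φ) (h : Periodic φ L)
    (hpos : ∀ x, 0 < φ x)
    (hode : ∀ x, deriv (deriv φ) x + 2 * θ * deriv φ x + p x * φ x = m * φ x) :
    0 ≤ m ∧ m ≤ L * ∫ x in (0)..L, p x ^ 2 := by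
  obtain ⟨x₀, hx₀⟩ := h.exists_forall_le_of_continuous hL hφ.continuous
  have hvc : Continuous (logDeriv φ) :=
    (hφ.continuous_deriv one_le_two).div hφ.continuous fun x => (hpos x).ne'
  have hvper : Periodic (logDeriv φ) L := fun x => by
    simp only [logDeriv_apply, h x, h.deriv x]
  have hv0 : logDeriv φ x₀ = 0 := by
    rw [logDeriv_apply, IsLocalMax.deriv_eq_zero (.of_forall hx₀), zero_div]
  exact riccati_periodic_bounds hL hvper
    (fun x => hasDerivAt_logDeriv_of_ode hφ (hpos x).ne' (hode x)) hvc hp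
    (h.intervalIntegral_logDeriv_eq_zero (hφ.of_le one_le_two) hpos) hp0 hv0

end Eigenfunction

theorem hasDerivAt_zero_of_abs_le_mul_sq {f : ℝ → ℝ} {C : ℝ} (h : ∀ x, |f x| ≤ C * x ^ 2) :
    HasDerivAt f 0 0 := by
  have hf0 : f 0 = 0 := abs_nonpos_iff.mp (by simpa using h 0)
  rw [hasDerivAt_iff_isLittleO]
  simp only [hf0, sub_zero, smul_zero]
  refine (IsBigO.of_bound C (Eventually.of_forall fun x => ?_)).trans_isLittleO
    (isLittleO_pow_id one_lt_two)
  simpa [Real.norm_eq_abs] using h x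

theorem stmt5_general (L c θ f'0 : ℝ) (hL : 0 < L) (hc : 0 < c) (hf'0 : 0 < f'0)
    (q : ℝ → ℝ) (hq : Continuous q)
    (hqmean : (∫ x in (0:ℝ)..L, q x) = 0)
    (k : ℝ → ℝ)
    (heig : ∀ lam : ℝ, ∃ φ : ℝ → ℝ, ContDiff ℝ 2 φ ∧ Function.Periodic φ L ∧
      (∀ x : ℝ, 0 < φ x) ∧
      ∀ x : ℝ, deriv (deriv φ) x + 2 * θ * deriv φ x
        + (θ ^ 2 + lam ^ 2 - c * lam + q x * lam + f'0) * φ x = k lam * φ x) :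
    k 0 = θ ^ 2 + f'0 ∧ 0 < k 0 ∧ HasDerivAt k (-c) 0 ∧ -c < 0 := by
  set r : ℝ → ℝ := fun lam => k lam - (θ ^ 2 + lam ^ 2 - c * lam + f'0)
  have hr : ∀ lam, |r lam| ≤ (L * ∫ x in (0)..L, q x ^ 2) * lam ^ 2 := fun lam => by
    obtain ⟨φ, hφ, hper, hpos, hode⟩ := heig lam
    obtain ⟨hr0, hr1⟩ := eigenvalue_bounds_of_pos_periodic_eigenfunction (p := fun x => lam * q x)
      (θ := θ) (m := r lam) hL (by fun_prop) (by rw [integral_const_mul, hqmean, mul_zero]) hφ hper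
      hpos fun x => by simp only [r]; linear_combination hode x
    simp only [mul_pow, integral_const_mul] at hr1
    rw [abs_of_nonneg hr0]
    linarith
  have hk0 : k 0 = θ ^ 2 + f'0 := by
    have := hr 0
    norm_num [r] at this
    linarith
  have hpoly : HasDerivAt (fun lam => θ ^ 2 + lam ^ 2 - c * lam + f'0) (-c) 0 := by
    simpa using (((hasDerivAt_pow 2 (0 : ℝ)).const_add (θ ^ 2)).sub
      ((hasDerivAt_id 0).const_mul c)).add_const f'0
  refine ⟨hk0, by rw [hk0]; positivity, ?_, neg_lt_zero.mpr hc⟩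
  have hk : k = fun lam => r lam + (θ ^ 2 + lam ^ 2 - c * lam + f'0) :=
    funext fun lam => by simp only [r, sub_add_cancel]
  rw [hk]
  exact ((hasDerivAt_zero_of_abs_le_mul_sq hr).add hpoly).congr_deriv (zero_add _)

/-- For the family of periodic principal eigenvalue problems
L_{θ,λ} g = g'' + 2θ g' + (θ² + λ² − cλ + q(x)λ + f'(0)) g, with q continuous, L-periodic and
of zero mean, one has k_θ(0) = θ² + f'(0) > 0 and (d k_θ/dλ)(0) = −c < 0. -/
theorem stmt5 (L c θ f'0 : ℝ) (hL : 0 < L) (hc : 0 < c) (hf'0 : 0 < f'0)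
    (q : ℝ → ℝ) (hq : Continuous q) (hqper : Function.Periodic q L)
    (hqmean : (∫ x in (0:ℝ)..L, q x) = 0)
    (k : ℝ → ℝ)
    (heig : ∀ lam : ℝ, ∃ φ : ℝ → ℝ, ContDiff ℝ 2 φ ∧ Function.Periodic φ L ∧
      (∀ x : ℝ, 0 < φ x) ∧
      ∀ x : ℝ, deriv (deriv φ) x + 2 * θ * deriv φ x
        + (θ ^ 2 + lam ^ 2 - c * lam + q x * lam + f'0) * φ x = k lam * φ x) :
    k 0 = θ ^ 2 + f'0 ∧ 0 < k 0 ∧ HasDerivAt k (-c) 0 ∧ -c < 0 :=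
  stmt5_general L c θ f'0 hL hc hf'0 q hq hqmean k heig
end

section
/- Let ψ : ℝ → ℝ be a positive C² solution of ψ''(x) + a(x) ψ(x) = 0 on ℝ where a is continuous and L-periodic, and suppose there exists K > 0 with |ψ'(x)| ≤ K ψ(x) for all x. If the infimum μ = inf_{x ∈ ℝ} ψ(x+L)/ψ(x) is attained in the limit along some sequence and ψ∞ is any locally uniform limit of the normalized translates ψ(·+x_n)/ψ(x_n) with ψ(x_n+L)/ψ(x_n) → μ, then ψ∞(x+L) = μ ψ∞(x) for all x ∈ ℝ; consequently ψ∞(x) = e^{θx} φ(x) with θ = L⁻¹ log μ and φ positive and L-periodic. -/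
/-!
The ratio `F x = ψ (x + L) / ψ x` has derivative `W / ψ x ^ 2`, where `W` is the Wronskian of `ψ`
and `ψ (· + L)`. Since `a` is `L`-periodic both solve the same equation, so `W` is constant and
`F` is strictly monotone or constant. In each case `F (xs n) → μ = inf F` forces
`F (x + xs n) → μ` for every `x` (a strictly antitone `F` approaches its infimum only at `+∞`,
so `xs n → +∞`). Passing to the limit in
`ψ (x + L + xs n) / ψ (xs n) = F (x + xs n) * (ψ (x + xs n) / ψ (xs n))` gives
`ψi (x + L) = μ * ψi x`. The gradient bound gives the Harnack inequality
`ψ y ≥ exp (-K |y - x|) * ψ x`, hence `ψi > 0`, and `φ x = exp (-θ x) * ψi x` is periodic.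
-/

open Filter Topology Real

theorem wronskian_eq_const {f g a : ℝ → ℝ} (hf : ContDiff ℝ 2 f) (hg : ContDiff ℝ 2 g)
    (hf'' : ∀ x, deriv (deriv f) x + a x * f x = 0)
    (hg'' : ∀ x, deriv (deriv g) x + a x * g x = 0) (x : ℝ) :
    f x * deriv g x - deriv f x * g x = f 0 * deriv g 0 - deriv f 0 * g 0 := by
  have hW : ∀ y, HasDerivAt (fun y => f y * deriv g y - deriv f y * g y) 0 y := by
    intro y
    have hfy := (hf.differentiable two_ne_zero y).hasDerivAt
    have hgy := (hg.differentiable two_ne_zero y).hasDerivAt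
    have hf'y := (hf.differentiable_deriv_two y).hasDerivAt
    have hg'y := (hg.differentiable_deriv_two y).hasDerivAt
    refine ((hfy.mul hg'y).sub (hf'y.mul hgy)).congr_deriv ?_
    linear_combination f y * hg'' y - g y * hf'' y
  exact is_const_of_deriv_eq_zero (fun y => (hW y).differentiableAt) (fun y => (hW y).deriv) x 0

theorem hasDerivAt_div_of_ode {f g a : ℝ → ℝ} (hf : ContDiff ℝ 2 f) (hg : ContDiff ℝ 2 g)
    (hf'' : ∀ x, deriv (deriv f) x + a x * f x = 0)
    (hg'' : ∀ x, deriv (deriv g) x + a x * g x = 0) (hf0 : ∀ x, f x ≠ 0) (x : ℝ) :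
    HasDerivAt (fun y => g y / f y) ((f 0 * deriv g 0 - deriv f 0 * g 0) * (f x ^ 2)⁻¹) x := by
  refine ((hg.differentiable two_ne_zero x).hasDerivAt.div
    (hf.differentiable two_ne_zero x).hasDerivAt (hf0 x)).congr_deriv ?_
  rw [← wronskian_eq_const hf hg hf'' hg'' x, div_eq_mul_inv]
  ring

theorem deriv_deriv_comp_add_const_add_mul_eq_zero {ψ a : ℝ → ℝ} {L : ℝ}
    (ha : Function.Periodic a L) (hode : ∀ x, deriv (deriv ψ) x + a x * ψ x = 0) (x : ℝ) :
    deriv (deriv fun y => ψ (y + L)) x + a x * ψ (x + L) = 0 := by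
  have hderiv : (deriv fun y => ψ (y + L)) = fun y => deriv ψ (y + L) :=
    funext fun y => deriv_comp_add_const ψ L y
  rw [hderiv, deriv_comp_add_const, ← ha x]
  exact hode (x + L)

theorem tendsto_comp_add_of_strictAnti {F : ℝ → ℝ} {μ : ℝ} {xs : ℕ → ℝ} (hF : StrictAnti F)
    (hμ : ∀ x, μ ≤ F x) (hxs : Tendsto (F ∘ xs) atTop (𝓝 μ)) (x : ℝ) :
    Tendsto (fun n => F (x + xs n)) atTop (𝓝 μ) := by
  have hglb : IsGLB (Set.range F) μ :=
    ⟨Set.forall_mem_range.2 hμ, fun b hb =>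
      ge_of_tendsto hxs (Eventually.of_forall fun n => hb (Set.mem_range_self (xs n)))⟩
  have hxs_top : Tendsto xs atTop atTop := by
    refine tendsto_atTop.2 fun b => ?_
    filter_upwards [hxs.eventually (gt_mem_nhds ((hμ (b + 1)).trans_lt (hF (lt_add_one b))))]
      with n hn
    exact (hF.lt_iff_gt.1 hn).le
  exact (tendsto_atTop_isGLB hF.antitone hglb).comp (tendsto_atTop_add_const_left atTop x hxs_top)

theorem tendsto_comp_add_of_strictMono {F : ℝ → ℝ} {μ : ℝ} {xs : ℕ → ℝ} (hF : StrictMono F)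
    (hμ : ∀ x, μ ≤ F x) (hxs : Tendsto (F ∘ xs) atTop (𝓝 μ)) (x : ℝ) :
    Tendsto (fun n => F (x + xs n)) atTop (𝓝 μ) := by
  have := tendsto_comp_add_of_strictAnti (F := F ∘ Neg.neg) (xs := fun n => -xs n)
    (hF.comp_strictAnti fun _ _ h => neg_lt_neg h) (fun y => hμ (-y))
    (by simpa [Function.comp_def] using hxs) (-x)
  simpa [Function.comp_def, neg_add_rev, add_comm] using this

theorem tendsto_comp_add_of_hasDerivAt_mul_pos {F q : ℝ → ℝ} {c μ : ℝ} {xs : ℕ → ℝ}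
    (hF : ∀ x, HasDerivAt F (c * q x) x) (hq : ∀ x, 0 < q x) (hμ : ∀ x, μ ≤ F x)
    (hxs : Tendsto (F ∘ xs) atTop (𝓝 μ)) (x : ℝ) :
    Tendsto (fun n => F (x + xs n)) atTop (𝓝 μ) := by
  rcases lt_trichotomy c 0 with hc | rfl | hc
  · exact tendsto_comp_add_of_strictAnti
      (strictAnti_of_hasDerivAt_neg hF fun y => mul_neg_of_neg_of_pos hc (hq y)) hμ hxs x
  · have hconst : ∀ y, F y = F 0 := fun y =>
      is_const_of_deriv_eq_zero (fun z => (hF z).differentiableAt)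
        (fun z => by simpa using (hF z).deriv) y 0
    have hμF : F 0 = μ :=
      tendsto_nhds_unique (by simp [Function.comp_def, hconst]) hxs
    simp only [hconst, hμF]
    exact tendsto_const_nhds
  · exact tendsto_comp_add_of_strictMono
      (strictMono_of_hasDerivAt_pos hF fun y => mul_pos hc (hq y)) hμ hxs x

theorem harnack_of_abs_deriv_le_mul {ψ : ℝ → ℝ} {K : ℝ} (hψ : Differentiable ℝ ψ)
    (hpos : ∀ x, 0 < ψ x) (hbound : ∀ x, |deriv ψ x| ≤ K * ψ x) (x y : ℝ) :
    ψ x * exp (-(K * |y - x|)) ≤ ψ y := by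
  have hlog : ∀ z, HasDerivAt (fun t => log (ψ t)) (deriv ψ z / ψ z) z := fun z =>
    (hψ z).hasDerivAt.log (hpos z).ne'
  have hlog_bound : ∀ z, ‖deriv (fun t => log (ψ t)) z‖ ≤ K := fun z => by
    rw [(hlog z).deriv, Real.norm_eq_abs, abs_div, abs_of_pos (hpos z), div_le_iff₀ (hpos z)]
    exact hbound z
  have hlip := convex_univ.norm_image_sub_le_of_norm_deriv_le
    (fun z _ => (hlog z).differentiableAt) (fun z _ => hlog_bound z)
    (Set.mem_univ x) (Set.mem_univ y)
  rw [Real.norm_eq_abs, Real.norm_eq_abs] at hlip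
  calc ψ x * exp (-(K * |y - x|)) = exp (log (ψ x) - K * |y - x|) := by
        rw [exp_sub, exp_log (hpos x), exp_neg, div_eq_mul_inv]
    _ ≤ exp (log (ψ y)) := exp_le_exp.2 (by linarith [neg_abs_le (log (ψ y) - log (ψ x))])
    _ = ψ y := exp_log (hpos y)

theorem exists_periodic_of_add_eq_mul {f : ℝ → ℝ} {L μ : ℝ} (hL : L ≠ 0) (hpos : ∀ x, 0 < f x)
    (hfL : ∀ x, f (x + L) = μ * f x) :
    ∃ φ : ℝ → ℝ, (∀ x, 0 < φ x) ∧ Function.Periodic φ L ∧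
      ∀ x, f x = exp (log μ / L * x) * φ x := by
  have hμ : 0 < μ := pos_of_mul_pos_left (hfL 0 ▸ hpos (0 + L)) (hpos 0).le
  refine ⟨fun x => exp (-(log μ / L * x)) * f x, fun x => mul_pos (exp_pos _) (hpos x),
    fun x => ?_, fun x => ?_⟩
  · have hθL : log μ / L * L = log μ := div_mul_cancel₀ _ hL
    dsimp only
    rw [hfL, mul_add, neg_add, exp_add, hθL, exp_neg (log μ), exp_log hμ]
    field_simp
  · dsimp only
    rw [← mul_assoc, ← exp_add, add_neg_cancel, exp_zero, one_mul]

theorem stmt7_general (L K μ : ℝ) (hL : 0 < L)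
    (a ψ ψi : ℝ → ℝ) (haper : Function.Periodic a L)
    (hψreg : ContDiff ℝ 2 ψ) (hψpos : ∀ x : ℝ, 0 < ψ x)
    (hode : ∀ x : ℝ, deriv (deriv ψ) x + a x * ψ x = 0)
    (hbound : ∀ x : ℝ, |deriv ψ x| ≤ K * ψ x)
    (hμ : μ = ⨅ x : ℝ, ψ (x + L) / ψ x)
    (xs : ℕ → ℝ)
    (hxs : Filter.Tendsto (fun n => ψ (xs n + L) / ψ (xs n)) Filter.atTop (nhds μ))
    (hlim : TendstoLocallyUniformly (fun n => fun t : ℝ => ψ (t + xs n) / ψ (xs n)) ψi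
      Filter.atTop) :
    (∀ x : ℝ, ψi (x + L) = μ * ψi x) ∧
      ∃ φ : ℝ → ℝ, (∀ x : ℝ, 0 < φ x) ∧ Function.Periodic φ L ∧
        ∀ x : ℝ, ψi x = Real.exp ((Real.log μ / L) * x) * φ x := by
  have hratio := hasDerivAt_div_of_ode (g := fun y => ψ (y + L)) hψreg
    (hψreg.comp (contDiff_id.add contDiff_const)) hode
    (deriv_deriv_comp_add_const_add_mul_eq_zero haper hode) fun x => (hψpos x).ne'
  have hμ_le : ∀ x, μ ≤ ψ (x + L) / ψ x := fun x =>
    hμ ▸ ciInf_le ⟨0, Set.forall_mem_range.2 fun y => (div_pos (hψpos _) (hψpos y)).le⟩ x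
  have hshift_ratio := tendsto_comp_add_of_hasDerivAt_mul_pos hratio
    (fun x => inv_pos.2 (pow_pos (hψpos x) 2)) hμ_le hxs
  have hpt : ∀ t, Tendsto (fun n => ψ (t + xs n) / ψ (xs n)) atTop (𝓝 (ψi t)) := fun t =>
    (tendstoLocallyUniformlyOn_univ.2 hlim).tendsto_at (Set.mem_univ t)
  have hshift : ∀ x, ψi (x + L) = μ * ψi x := fun x => by
    refine tendsto_nhds_unique (hpt (x + L)) (((hshift_ratio x).mul (hpt x)).congr fun n => ?_)
    rw [div_mul_div_cancel₀ (hψpos _).ne', add_right_comm]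
  have hψi_pos : ∀ x, 0 < ψi x := fun x => by
    refine (exp_pos (-(K * |x|))).trans_le
      (ge_of_tendsto (hpt x) (Eventually.of_forall fun n => ?_))
    rw [le_div_iff₀ (hψpos _), mul_comm]
    simpa using harnack_of_abs_deriv_le_mul (hψreg.differentiable two_ne_zero) hψpos hbound
      (xs n) (x + xs n)
  exact ⟨hshift, exists_periodic_of_add_eq_mul hL.ne' hψi_pos hshift⟩

/-- Limit of normalized translates of a positive solution of ψ'' + aψ = 0 along a minimizing
sequence of the period-ratio: any locally uniform limit ψi satisfies ψi(x+L) = μ ψi(x) and is of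
the form e^{θx}φ(x) with θ = L⁻¹ log μ and φ positive L-periodic. -/
theorem stmt7 (L K μ : ℝ) (hL : 0 < L) (hK : 0 < K)
    (a ψ ψi : ℝ → ℝ) (ha : Continuous a) (haper : Function.Periodic a L)
    (hψreg : ContDiff ℝ 2 ψ) (hψpos : ∀ x : ℝ, 0 < ψ x)
    (hode : ∀ x : ℝ, deriv (deriv ψ) x + a x * ψ x = 0)
    (hbound : ∀ x : ℝ, |deriv ψ x| ≤ K * ψ x)
    (hμ : μ = ⨅ x : ℝ, ψ (x + L) / ψ x)
    (xs : ℕ → ℝ)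
    (hxs : Filter.Tendsto (fun n => ψ (xs n + L) / ψ (xs n)) Filter.atTop (nhds μ))
    (hlim : TendstoLocallyUniformly (fun n => fun t : ℝ => ψ (t + xs n) / ψ (xs n)) ψi
      Filter.atTop) :
    (∀ x : ℝ, ψi (x + L) = μ * ψi x) ∧
      ∃ φ : ℝ → ℝ, (∀ x : ℝ, 0 < φ x) ∧ Function.Periodic φ L ∧
        ∀ x : ℝ, ψi x = Real.exp ((Real.log μ / L) * x) * φ x :=
  stmt7_general L K μ hL a ψ ψi haper hψreg hψpos hode hbound hμ xs hxs hlim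
end

section
/- Let α, β ∈ (0, π), let q be continuous L-periodic, c ∈ ℝ, f Lipschitz with f ≥ 0 on [0,1] and f(0)=0, and let φ be a C² solution of Δφ + (q(x)−c)∂_yφ + f(φ) = 0 on ℝ² with 0 ≤ φ ≤ 1 satisfying the conical conditions: sup over C⁻_{α,β,l} of φ → 0 as l → −∞ and inf over C⁺_{α,β,l} of φ → 1 as l → +∞. Then for every l ∈ ℝ, inf_{(x,y) ∈ C⁺_{α,β,l}} φ(x,y) > 0. -/
/-- The lower cone C⁻_{α,β,l}. -/
def Cminus (α β l : ℝ) : Set (ℝ × ℝ) :=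
  {p | (p.1 ≤ 0 → p.2 ≤ p.1 * (Real.cos α / Real.sin α) + l) ∧
       (0 ≤ p.1 → p.2 ≤ -p.1 * (Real.cos β / Real.sin β) + l)}

/-- The upper cone C⁺_{α,β,l}. -/
def Cplus (α β l : ℝ) : Set (ℝ × ℝ) := closure (Cminus α β l)ᶜ

open Real Set Filter Topology Function

theorem IsLocalMin.deriv_deriv_nonneg {f : ℝ → ℝ} {x₀ : ℝ} (h : IsLocalMin f x₀)
    (hc : ContinuousAt f x₀) : 0 ≤ deriv (deriv f) x₀ := by
  by_contra! hneg
  -- the second derivative test makes `x₀` a local maximum too, so `f` is locally constant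
  have hmax := isLocalMax_of_deriv_deriv_neg hneg h.deriv_eq_zero hc
  have hconst : f =ᶠ[𝓝 x₀] fun _ => f x₀ :=
    (h.and hmax).mono fun _ hy => le_antisymm hy.2 hy.1
  have hderiv : deriv f =ᶠ[𝓝 x₀] fun _ => 0 :=
    hconst.eventuallyEq_nhds.mono fun _ hy => hy.deriv_eq.trans (deriv_const _ _)
  simp [hderiv.deriv_eq] at hneg

section Slices

variable {𝕜 E F G : Type*} [NontriviallyNormedField 𝕜] [NormedAddCommGroup E] [NormedSpace 𝕜 E]
  [NormedAddCommGroup F] [NormedSpace 𝕜 F] [NormedAddCommGroup G] [NormedSpace 𝕜 G]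
  {n : WithTop ℕ∞} {f : E → F → G}

theorem ContDiff.uncurry_left (x : E) (h : ContDiff 𝕜 n (uncurry f)) : ContDiff 𝕜 n (f x) :=
  h.comp (contDiff_const.prodMk contDiff_id)

theorem ContDiff.uncurry_right (y : F) (h : ContDiff 𝕜 n (uncurry f)) :
    ContDiff 𝕜 n fun x => f x y :=
  h.comp (contDiff_id.prodMk contDiff_const)

end Slices

section SecondOrder

variable {g h : ℝ → ℝ} {x₀ : ℝ}

theorem IsLocalMin.deriv_eq_of_sub (hg : Differentiable ℝ g) (hh : Differentiable ℝ h)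
    (hmin : IsLocalMin (g - h) x₀) : deriv g x₀ = deriv h x₀ := by
  have := hmin.deriv_eq_zero
  rw [deriv_sub (hg x₀) (hh x₀)] at this
  linarith

theorem IsLocalMin.deriv_deriv_le_of_sub (hg : ContDiff ℝ 2 g) (hh : ContDiff ℝ 2 h)
    (hmin : IsLocalMin (g - h) x₀) : deriv (deriv h) x₀ ≤ deriv (deriv g) x₀ := by
  have hnonneg := hmin.deriv_deriv_nonneg (hg.continuous.sub hh.continuous).continuousAt
  have hsub : deriv (g - h) = deriv g - deriv h :=
    funext fun x => deriv_sub (hg.differentiable two_ne_zero x) (hh.differentiable two_ne_zero x)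
  rw [hsub, deriv_sub (hg.differentiable_deriv_two x₀) (hh.differentiable_deriv_two x₀)] at hnonneg
  linarith

end SecondOrder

section Comparison

noncomputable def driftLaplacian (b : ℝ → ℝ) (u : ℝ → ℝ → ℝ) (x y : ℝ) : ℝ :=
  dX (dX u) x y + dY (dY u) x y + b x * dY u x y

variable {u w : ℝ → ℝ → ℝ}

theorem driftLaplacian_le_of_isLocalMin_sub (b : ℝ → ℝ) (hu : ContDiff ℝ 2 (uncurry u))
    (hw : ContDiff ℝ 2 (uncurry w)) {x y : ℝ} (hmin : IsLocalMin (uncurry u - uncurry w) (x, y)) :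
    driftLaplacian b w x y ≤ driftLaplacian b u x y := by
  have hminX : IsLocalMin ((fun s => u s y) - fun s => w s y) x :=
    hmin.comp_continuous (g := fun s => (s, y)) (by fun_prop)
  have hminY : IsLocalMin ((fun s => u x s) - fun s => w x s) y :=
    hmin.comp_continuous (g := fun s => (x, s)) (by fun_prop)
  have hxx := hminX.deriv_deriv_le_of_sub (hu.uncurry_right y) (hw.uncurry_right y)
  have hyy := hminY.deriv_deriv_le_of_sub (hu.uncurry_left x) (hw.uncurry_left x)
  have hy := hminY.deriv_eq_of_sub ((hu.uncurry_left x).differentiable two_ne_zero)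
    ((hw.uncurry_left x).differentiable two_ne_zero)
  simp only [driftLaplacian, dX, dY] at hxx hyy hy ⊢
  rw [hy]
  linarith

theorem IsCompact.le_of_driftLaplacian_lt {K : Set (ℝ × ℝ)} (hK : IsCompact K) (b : ℝ → ℝ)
    (hu : ContDiff ℝ 2 (uncurry u)) (hw : ContDiff ℝ 2 (uncurry w))
    (hbdry : ∀ p ∈ K, p ∉ interior K → w p.1 p.2 ≤ u p.1 p.2)
    (hint : ∀ p ∈ interior K, driftLaplacian b u p.1 p.2 < driftLaplacian b w p.1 p.2) :
    ∀ p ∈ K, w p.1 p.2 ≤ u p.1 p.2 := by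
  intro p hp
  obtain ⟨p₀, hp₀K, hmin⟩ :=
    hK.exists_isMinOn ⟨p, hp⟩ (hu.continuous.sub hw.continuous).continuousOn
  by_cases hp₀ : p₀ ∈ interior K
  · have hloc := hmin.isLocalMin (mem_interior_iff_mem_nhds.mp hp₀)
    exact absurd (driftLaplacian_le_of_isLocalMin_sub b hu hw hloc) (hint p₀ hp₀).not_ge
  · have hle : (uncurry u - uncurry w) p₀ ≤ (uncurry u - uncurry w) p := hmin hp
    have := hbdry p₀ hp₀K hp₀
    simp only [Pi.sub_apply, uncurry] at hle
    linarith

end Comparison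

section Barrier

theorem hasDerivAt_mul_sub (a b x : ℝ) : HasDerivAt (fun x => a * (x - b)) a x := by
  simpa using ((hasDerivAt_id x).sub_const b).const_mul a

theorem deriv_cos_mul_sub (a b : ℝ) :
    deriv (fun x => cos (a * (x - b))) = fun x => -a * sin (a * (x - b)) :=
  funext fun x => by rw [(hasDerivAt_mul_sub a b x).cos.deriv]; ring

theorem deriv_sin_mul_sub (a b : ℝ) :
    deriv (fun x => sin (a * (x - b))) = fun x => a * cos (a * (x - b)) :=
  funext fun x => by rw [(hasDerivAt_mul_sub a b x).sin.deriv]; ring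

theorem deriv_exp_mul_sub (a b : ℝ) :
    deriv (fun x => exp (a * (x - b))) = fun x => a * exp (a * (x - b)) :=
  funext fun x => by rw [(hasDerivAt_mul_sub a b x).exp.deriv]; ring

theorem dX_mul (g h : ℝ → ℝ) : dX (fun x y => g x * h y) = fun x y => deriv g x * h y := by
  ext x y
  exact congrFun (deriv_mul_const_field' (h y)) x

theorem dY_mul (g h : ℝ → ℝ) : dY (fun x y => g x * h y) = fun x y => g x * deriv h y := by
  ext x y
  exact congrFun (deriv_const_mul_field' (g x)) y

/-- The frequency `π / 2` makes the cosine vanish at `x = x₀ ± 1`, and the rate `M + π / 2` lets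
`∂_y²` beat both `∂_x²` and a drift bounded by `M` (see `driftLaplacian_barrier_pos`). -/
noncomputable def barrier (M A x₀ y₀ : ℝ) (x y : ℝ) : ℝ :=
  A * cos (π / 2 * (x - x₀)) * (exp ((M + π / 2) * (y - y₀)) - 1)

variable {M A x₀ y₀ : ℝ}

theorem contDiff_barrier : ContDiff ℝ 2 (uncurry (barrier M A x₀ y₀)) := by
  unfold barrier uncurry
  fun_prop

theorem driftLaplacian_barrier (b : ℝ → ℝ) (x y : ℝ) :
    driftLaplacian b (barrier M A x₀ y₀) x y =
      A * cos (π / 2 * (x - x₀)) * ((π / 2) ^ 2 +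
        exp ((M + π / 2) * (y - y₀)) * ((M + π / 2) * (M + π / 2 + b x) - (π / 2) ^ 2)) := by
  unfold driftLaplacian barrier
  simp only [dX_mul, dY_mul, deriv_const_mul_field', deriv_sub_const_fun, deriv_cos_mul_sub,
    deriv_sin_mul_sub, deriv_exp_mul_sub]
  ring

theorem driftLaplacian_barrier_pos {b : ℝ → ℝ} {x y : ℝ} (hb : |b x| ≤ M) (hA : 0 < A)
    (hx : |x - x₀| < 1) : 0 < driftLaplacian b (barrier M A x₀ y₀) x y := by
  rw [driftLaplacian_barrier]
  have hcos : 0 < cos (π / 2 * (x - x₀)) := by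
    obtain ⟨hx₁, hx₂⟩ := abs_lt.mp hx
    apply cos_pos_of_mem_Ioo
    constructor <;> nlinarith [pi_pos]
  have hM : 0 ≤ M := (abs_nonneg _).trans hb
  have hdrift : 0 ≤ M + b x := by linarith [neg_abs_le (b x)]
  have hgrowth : 0 ≤ (M + π / 2) * (M + π / 2 + b x) - (π / 2) ^ 2 := by nlinarith [pi_pos]
  have := exp_pos ((M + π / 2) * (y - y₀))
  positivity

theorem barrier_left (y : ℝ) : barrier M A x₀ y₀ (x₀ - 1) y = 0 := by
  simp [barrier]

theorem barrier_right (y : ℝ) : barrier M A x₀ y₀ (x₀ + 1) y = 0 := by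
  simp [barrier]

theorem barrier_bottom (x : ℝ) : barrier M A x₀ y₀ x y₀ = 0 := by
  simp [barrier]

theorem barrier_le (hA : 0 ≤ A) (hM : 0 ≤ M) {x y : ℝ} (hy : y₀ ≤ y) :
    barrier M A x₀ y₀ x y ≤ A * (exp ((M + π / 2) * (y - y₀)) - 1) := by
  have hexp : 0 ≤ exp ((M + π / 2) * (y - y₀)) - 1 := by
    rw [sub_nonneg]; exact one_le_exp (by nlinarith [pi_pos])
  unfold barrier
  nlinarith [cos_le_one (π / 2 * (x - x₀)), mul_nonneg hA hexp]

theorem barrier_center (y : ℝ) :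
    barrier M A x₀ y₀ x₀ y = A * (exp ((M + π / 2) * (y - y₀)) - 1) := by
  simp [barrier]

end Barrier

theorem fst_or_snd_endpoint_of_notMem_interior {a b c d : ℝ} {p : ℝ × ℝ}
    (hp : p ∈ Icc a b ×ˢ Icc c d) (hi : p ∉ interior (Icc a b ×ˢ Icc c d)) :
    p.1 = a ∨ p.1 = b ∨ p.2 = c ∨ p.2 = d := by
  rw [interior_prod_eq, interior_Icc, interior_Icc] at hi
  obtain ⟨⟨ha, hb⟩, hc, hd⟩ := hp
  by_contra! h
  exact hi ⟨⟨ha.lt_of_ne h.1.symm, hb.lt_of_ne h.2.1⟩,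
    hc.lt_of_ne h.2.2.1.symm, hd.lt_of_ne h.2.2.2⟩

/-- The ratio `barrier (x₀, y₀) / max barrier (·, y₀ + T)` for the barrier with bottom edge
`y = y₀ - 1`. -/
noncomputable def harnackFactor (M T : ℝ) : ℝ :=
  (exp (M + π / 2) - 1) / (exp ((M + π / 2) * (T + 1)) - 1)

theorem harnackFactor_pos {M T : ℝ} (hM : 0 ≤ M) (hT : 0 ≤ T) : 0 < harnackFactor M T := by
  have hpos : 0 < M + π / 2 := by positivity
  unfold harnackFactor
  apply div_pos <;> rw [sub_pos] <;> exact one_lt_exp_iff.mpr (by positivity)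

section Cone

/-- A Lipschitz constant of the boundary of the cones `C^±_{α,β,l}`. -/
noncomputable def coneSlope (α β : ℝ) : ℝ := max |cos α / sin α| |cos β / sin β|

theorem coneSlope_nonneg (α β : ℝ) : 0 ≤ coneSlope α β :=
  (abs_nonneg _).trans (le_max_left _ _)

theorem mem_Cplus_iff {α β l : ℝ} {p : ℝ × ℝ} :
    p ∈ Cplus α β l ↔
      (p.1 ≤ 0 ∧ p.1 * (cos α / sin α) + l ≤ p.2) ∨
        (0 ≤ p.1 ∧ -p.1 * (cos β / sin β) + l ≤ p.2) := by
  constructor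
  · have hclosed : IsClosed {p : ℝ × ℝ | (p.1 ≤ 0 ∧ p.1 * (cos α / sin α) + l ≤ p.2) ∨
        (0 ≤ p.1 ∧ -p.1 * (cos β / sin β) + l ≤ p.2)} :=
      ((isClosed_le continuous_fst continuous_const).inter
        (isClosed_le (by fun_prop) continuous_snd)).union
        ((isClosed_le continuous_const continuous_fst).inter
        (isClosed_le (by fun_prop) continuous_snd))
    refine fun hp => closure_minimal (fun p hp => ?_) hclosed hp
    simp only [Cminus, mem_compl_iff, mem_ofPred_eq, not_and_or, not_forall, not_le] at hp
    rcases hp with ⟨h1, h2⟩ | ⟨h1, h2⟩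
    exacts [Or.inl ⟨h1, h2.le⟩, Or.inr ⟨h1, h2.le⟩]
  · intro hp
    -- pushing `p` up by `ε` gives points of the open complement of `C⁻` converging to `p`
    have hlim : Tendsto (fun ε : ℝ => (p.1, p.2 + ε)) (𝓝[>] 0) (𝓝 p) := by
      apply tendsto_nhdsWithin_of_tendsto_nhds
      simpa using (continuous_const.prodMk (continuous_const.add continuous_id)).tendsto' 0 p
        (by simp)
    refine mem_closure_of_tendsto hlim (eventually_nhdsWithin_of_forall fun ε hε => ?_)
    simp only [Cminus, mem_compl_iff, mem_ofPred_eq, not_and_or, not_forall, not_le]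
    rcases hp with ⟨h1, h2⟩ | ⟨h1, h2⟩
    · exact Or.inl ⟨h1, by linarith [mem_Ioi.mp hε]⟩
    · exact Or.inr ⟨h1, by linarith [mem_Ioi.mp hε]⟩

theorem Cplus_antitone (α β : ℝ) : Antitone (Cplus α β) := fun l l' hl p hp => by
  rw [mem_Cplus_iff] at hp ⊢
  rcases hp with ⟨h1, h2⟩ | ⟨h1, h2⟩
  exacts [Or.inl ⟨h1, by linarith⟩, Or.inr ⟨h1, by linarith⟩]

theorem mem_Cplus_add {α β l d : ℝ} {p q : ℝ × ℝ} (hp : p ∈ Cplus α β l)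
    (hq : p.2 + d + coneSlope α β * |q.1 - p.1| ≤ q.2) : q ∈ Cplus α β (l + d) := by
  have hα : ∀ t, |cos α / sin α * t| ≤ coneSlope α β * |t| := fun t => by
    rw [abs_mul]; exact mul_le_mul_of_nonneg_right (le_max_left _ _) (abs_nonneg t)
  have hβ : ∀ t, |cos β / sin β * t| ≤ coneSlope α β * |t| := fun t => by
    rw [abs_mul]; exact mul_le_mul_of_nonneg_right (le_max_right _ _) (abs_nonneg t)
  rw [mem_Cplus_iff] at hp ⊢
  rcases le_total q.1 0 with hq1 | hq1
  · refine Or.inl ⟨hq1, ?_⟩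
    rcases hp with ⟨hp1, hp2⟩ | ⟨hp1, hp2⟩
    · linarith [le_abs_self (cos α / sin α * (q.1 - p.1)), hα (q.1 - p.1)]
    · have hq' := hα q.1
      have hp' := hβ p.1
      rw [abs_of_nonpos (by linarith : q.1 - p.1 ≤ 0)] at hq
      rw [abs_of_nonpos hq1] at hq'
      rw [abs_of_nonneg hp1] at hp'
      linarith [le_abs_self (cos α / sin α * q.1), le_abs_self (cos β / sin β * p.1)]
  · refine Or.inr ⟨hq1, ?_⟩
    rcases hp with ⟨hp1, hp2⟩ | ⟨hp1, hp2⟩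
    · have hq' := hβ q.1
      have hp' := hα p.1
      rw [abs_of_nonneg (by linarith : 0 ≤ q.1 - p.1)] at hq
      rw [abs_of_nonneg hq1] at hq'
      rw [abs_of_nonpos hp1] at hp'
      linarith [neg_abs_le (cos β / sin β * q.1), neg_abs_le (cos α / sin α * p.1)]
    · linarith [neg_abs_le (cos β / sin β * (q.1 - p.1)), hβ (q.1 - p.1)]

end Cone

section Harnack

variable {φ : ℝ → ℝ → ℝ} {b : ℝ → ℝ} {M : ℝ}

theorem harnackFactor_mul_le_of_le_on_segment (hφ : ContDiff ℝ 2 (uncurry φ))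
    (hφ0 : ∀ x y, 0 ≤ φ x y) (hsuper : ∀ x y, driftLaplacian b φ x y ≤ 0) (hb : ∀ x, |b x| ≤ M)
    {T m x₀ y₀ : ℝ} (hT : 0 ≤ T) (hm : 0 < m)
    (htop : ∀ x, |x - x₀| ≤ 1 → m ≤ φ x (y₀ + T)) :
    harnackFactor M T * m ≤ φ x₀ y₀ := by
  have hM : 0 ≤ M := (abs_nonneg _).trans (hb 0)
  set k := exp ((M + π / 2) * (T + 1)) - 1
  have hk : 0 < k := sub_pos.mpr (one_lt_exp_iff.mpr (by positivity))
  set A := m / k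
  have hA : 0 < A := div_pos hm hk
  have hcompare := (isCompact_Icc.prod isCompact_Icc).le_of_driftLaplacian_lt
    (K := Icc (x₀ - 1) (x₀ + 1) ×ˢ Icc (y₀ - 1) (y₀ + T)) b hφ
    (contDiff_barrier (M := M) (A := A) (x₀ := x₀) (y₀ := y₀ - 1)) ?_ ?_
    (x₀, y₀) ⟨⟨by linarith, by linarith⟩, by linarith, by linarith⟩
  · rw [barrier_center, sub_sub_cancel, mul_one] at hcompare
    calc harnackFactor M T * m = A * (exp (M + π / 2) - 1) := by
          unfold harnackFactor; ring
      _ ≤ φ x₀ y₀ := hcompare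
  · intro p hp hi
    rcases fst_or_snd_endpoint_of_notMem_interior hp hi with h | h | h | h
    · rw [h, barrier_left]; exact hφ0 _ _
    · rw [h, barrier_right]; exact hφ0 _ _
    · rw [h, barrier_bottom]; exact hφ0 _ _
    · have hx : |p.1 - x₀| ≤ 1 := abs_le.mpr ⟨by linarith [hp.1.1], by linarith [hp.1.2]⟩
      calc barrier M A x₀ (y₀ - 1) p.1 p.2 ≤ A * k := by
            convert barrier_le hA.le hM (by linarith : y₀ - 1 ≤ p.2) using 4
            rw [h]; ring
        _ = m := div_mul_cancel₀ m hk.ne'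
        _ ≤ φ p.1 p.2 := h ▸ htop p.1 hx
  · intro p hp
    rw [interior_prod_eq, interior_Icc, interior_Icc] at hp
    have hx : |p.1 - x₀| < 1 := abs_lt.mpr ⟨by linarith [hp.1.1], by linarith [hp.1.2]⟩
    exact (hsuper p.1 p.2).trans_lt (driftLaplacian_barrier_pos (hb p.1) hA hx)

theorem le_on_Cplus_of_le_on_Cplus_add_one (hφ : ContDiff ℝ 2 (uncurry φ)) (hφ0 : ∀ x y, 0 ≤ φ x y)
    (hsuper : ∀ x y, driftLaplacian b φ x y ≤ 0) (hb : ∀ x, |b x| ≤ M)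
    {α β l m : ℝ} (hm : 0 < m) (h : ∀ p ∈ Cplus α β (l + 1), m ≤ φ p.1 p.2) :
    ∀ p ∈ Cplus α β l, harnackFactor M (1 + coneSlope α β) * m ≤ φ p.1 p.2 := by
  intro p hp
  refine harnackFactor_mul_le_of_le_on_segment hφ hφ0 hsuper hb
    (by linarith [coneSlope_nonneg α β]) hm fun x hx => h (x, _) (mem_Cplus_add hp ?_)
  have := mul_le_of_le_one_right (coneSlope_nonneg α β) hx
  dsimp only
  linarith

theorem pow_mul_le_on_Cplus_sub (hφ : ContDiff ℝ 2 (uncurry φ)) (hφ0 : ∀ x y, 0 ≤ φ x y)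
    (hsuper : ∀ x y, driftLaplacian b φ x y ≤ 0) (hb : ∀ x, |b x| ≤ M)
    {α β l m : ℝ} (hm : 0 < m) (h : ∀ p ∈ Cplus α β l, m ≤ φ p.1 p.2) (n : ℕ) :
    ∀ p ∈ Cplus α β (l - n), harnackFactor M (1 + coneSlope α β) ^ n * m ≤ φ p.1 p.2 := by
  induction n with
  | zero => simpa using h
  | succ n ih =>
    have hκ : 0 < harnackFactor M (1 + coneSlope α β) :=
      harnackFactor_pos ((abs_nonneg _).trans (hb 0)) (by linarith [coneSlope_nonneg α β])
    intro p hp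
    calc harnackFactor M (1 + coneSlope α β) ^ (n + 1) * m
        = harnackFactor M (1 + coneSlope α β) * (harnackFactor M (1 + coneSlope α β) ^ n * m) := by
          ring
      _ ≤ φ p.1 p.2 := le_on_Cplus_of_le_on_Cplus_add_one hφ hφ0 hsuper hb (by positivity)
          (fun p' hp' => ih p' (by rwa [show l - (n + 1 : ℝ) + 1 = l - n by ring] at hp'))
          p (by exact_mod_cast hp)

theorem exists_pos_le_on_Cplus (hφ : ContDiff ℝ 2 (uncurry φ)) (hφ0 : ∀ x y, 0 ≤ φ x y)
    (hsuper : ∀ x y, driftLaplacian b φ x y ≤ 0) (hb : ∀ x, |b x| ≤ M)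
    {α β l₀ m : ℝ} (hm : 0 < m) (h : ∀ p ∈ Cplus α β l₀, m ≤ φ p.1 p.2) (l : ℝ) :
    ∃ m' > 0, ∀ p ∈ Cplus α β l, m' ≤ φ p.1 p.2 := by
  have hκ : 0 < harnackFactor M (1 + coneSlope α β) :=
    harnackFactor_pos ((abs_nonneg _).trans (hb 0)) (by linarith [coneSlope_nonneg α β])
  obtain ⟨n, hn⟩ := exists_nat_ge (l₀ - l)
  exact ⟨_, by positivity, fun p hp =>
    pow_mul_le_on_Cplus_sub hφ hφ0 hsuper hb hm h n p (Cplus_antitone α β (by linarith) hp)⟩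

end Harnack

theorem stmt13_general (α β : ℝ)
    (L c : ℝ) (hL : 0 < L) (q f : ℝ → ℝ) (hq : Continuous q) (hqper : Function.Periodic q L)
    (hfnonneg : ∀ s ∈ Set.Icc (0:ℝ) 1, 0 ≤ f s)
    (φ : ℝ → ℝ → ℝ) (hreg : ContDiff ℝ 2 (fun p : ℝ × ℝ => φ p.1 p.2))
    (hrange : ∀ x y : ℝ, φ x y ∈ Set.Icc (0:ℝ) 1)
    (heq : ∀ x y : ℝ, dX (dX φ) x y + dY (dY φ) x y + (q x - c) * dY φ x y + f (φ x y) = 0)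
    (hcone1 : ∀ ε > (0:ℝ), ∃ l₁ : ℝ, ∀ l ≥ l₁, ∀ p ∈ Cplus α β l, 1 - ε ≤ φ p.1 p.2) :
    ∀ l : ℝ, ∃ m > (0:ℝ), ∀ p ∈ Cplus α β l, m ≤ φ p.1 p.2 := by
  intro l
  obtain ⟨M, hM⟩ : ∃ M, ∀ x, |q x - c| ≤ M := by
    obtain ⟨M, hM⟩ := isBounded_iff_forall_norm_le.mp
      ((hqper.comp (· - c)).isBounded_of_continuous hL.ne' (hq.sub continuous_const))
    exact ⟨M, fun x => hM _ (mem_range_self x)⟩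
  have hsuper : ∀ x y, driftLaplacian (fun x => q x - c) φ x y ≤ 0 := fun x y => by
    unfold driftLaplacian
    linarith [heq x y, hfnonneg _ (hrange x y)]
  obtain ⟨l₁, hl₁⟩ := hcone1 (1 / 2) (by norm_num)
  exact exists_pos_le_on_Cplus hreg (fun x y => (hrange x y).1) hsuper hM
    (by norm_num : (0 : ℝ) < 1 / 2) (fun p hp => by linarith [hl₁ l₁ le_rfl p hp]) l

/-- For a conical front φ satisfying the conical conditions at infinity, the infimum of φ over
any upper cone C⁺_{α,β,l} is positive. -/
theorem stmt13 (α β : ℝ) (hα : α ∈ Set.Ioo 0 Real.pi) (hβ : β ∈ Set.Ioo 0 Real.pi)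
    (L c : ℝ) (hL : 0 < L) (q f : ℝ → ℝ) (hq : Continuous q) (hqper : Function.Periodic q L)
    (hf : ∃ K : NNReal, LipschitzWith K f) (hf0 : f 0 = 0)
    (hfnonneg : ∀ s ∈ Set.Icc (0:ℝ) 1, 0 ≤ f s)
    (φ : ℝ → ℝ → ℝ) (hreg : ContDiff ℝ 2 (fun p : ℝ × ℝ => φ p.1 p.2))
    (hrange : ∀ x y : ℝ, φ x y ∈ Set.Icc (0:ℝ) 1)
    (heq : ∀ x y : ℝ, dX (dX φ) x y + dY (dY φ) x y + (q x - c) * dY φ x y + f (φ x y) = 0)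
    (hcone0 : ∀ ε > (0:ℝ), ∃ l₀ : ℝ, ∀ l ≤ l₀, ∀ p ∈ Cminus α β l, φ p.1 p.2 ≤ ε)
    (hcone1 : ∀ ε > (0:ℝ), ∃ l₁ : ℝ, ∀ l ≥ l₁, ∀ p ∈ Cplus α β l, 1 - ε ≤ φ p.1 p.2) :
    ∀ l : ℝ, ∃ m > (0:ℝ), ∀ p ∈ Cplus α β l, m ≤ φ p.1 p.2 :=
  stmt13_general α β L c hL q f hq hqper hfnonneg φ hreg hrange heq hcone1
end
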